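/- Let 𝓧 be a nonempty finite set, M a positive integer, and L, U : 𝓧 → ℝ^M. Let Π̂ = {x ∈ 𝓧 : L(x) ∈ Par(L(𝓧))}. Then for every x ∈ 𝓧, infDist(U(x), Dom(L(Π̂))) ≤ d∞(U(x), L(x)), i.e., the infimum sup-metric distance from U(x) to the dominated region of L(Π̂) is at most the sup-metric distance between U(x) and L(x). -/

import Mathlib

/-- The dominated region of a set `B ⊆ ℝ^M` (with the componentwise order). -/
def Dom {M : ℕ} (B : Set (Fin M → ℝ)) : Set (Fin M → ℝ) :=
  {s | ∃ s' ∈ B, s ≤ s'}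

/-- The Pareto front of `B`: the topological frontier of its dominated region. -/
def Par {M : ℕ} (B : Set (Fin M → ℝ)) : Set (Fin M → ℝ) :=
  frontier (Dom B)

/-!
Every `L x` lies below a maximal element `L x'` of the finite set `L(𝓧)`, and a maximal element
lies on the Pareto front: raising it by `t > 0` in every coordinate leaves `Dom`, so it is not
interior to `Dom`. Hence `x' ∈ Π̂`, `L x ∈ Dom (L(Π̂))`, and `L x` itself witnesses the bound.
-/

open Set Filter Topology

section Pareto

variable {M : ℕ} {B : Set (Fin M → ℝ)} {y : Fin M → ℝ}

lemma subset_dom : B ⊆ Dom B := fun y hy => ⟨y, hy, le_rfl⟩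

lemma add_const_notMem_dom [NeZero M] (hy : Maximal (· ∈ B) y) {t : ℝ} (ht : 0 < t) :
    y + Function.const (Fin M) t ∉ Dom B := by
  rintro ⟨b, hb, hle⟩
  exact hy.not_gt hb ((lt_add_of_pos_right y (Function.const_pos.2 ht)).trans_le hle)

lemma notMem_interior_dom [NeZero M] (hy : Maximal (· ∈ B) y) : y ∉ interior (Dom B) := by
  intro h
  have hcont : Continuous fun t : ℝ => y + Function.const (Fin M) t :=
    continuous_const.add (continuous_pi fun _ => continuous_id)
  have hlim : Tendsto (fun t : ℝ => y + Function.const (Fin M) t) (𝓝[>] 0) (𝓝 y) :=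
    tendsto_nhdsWithin_of_tendsto_nhds (hcont.tendsto' 0 y (by simp))
  obtain ⟨t, ht_int, ht⟩ :=
    ((hlim.eventually (isOpen_interior.mem_nhds h)).and self_mem_nhdsWithin).exists
  exact add_const_notMem_dom hy ht (interior_subset ht_int)

lemma Maximal.mem_par [NeZero M] (hy : Maximal (· ∈ B) y) : y ∈ Par B :=
  ⟨subset_closure (subset_dom hy.prop), notMem_interior_dom hy⟩

lemma mem_dom_image_par {𝓧 : Type*} [Finite 𝓧] [NeZero M] (L : 𝓧 → Fin M → ℝ) (x : 𝓧) :
    L x ∈ Dom (L '' {x | L x ∈ Par (range L)}) := by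
  obtain ⟨m, hle, hmax⟩ := (finite_range L).exists_le_maximal (mem_range_self x)
  obtain ⟨x', rfl⟩ := hmax.prop
  exact ⟨L x', mem_image_of_mem L hmax.mem_par, hle⟩

end Pareto

theorem stmt18_general (𝓧 : Type*) [Fintype 𝓧] {M : ℕ} (hM : 0 < M)
    (L U : 𝓧 → (Fin M → ℝ))
    (Pihat : Set 𝓧) (hPi : Pihat = {x | L x ∈ Par (Set.range L)}) :
    ∀ x : 𝓧, Metric.infDist (U x) (Dom (L '' Pihat)) ≤ dist (U x) (L x) := by
  have : NeZero M := ⟨hM.ne'⟩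
  subst hPi
  exact fun x => Metric.infDist_le_dist_of_mem (mem_dom_image_par L x)

theorem stmt18 (𝓧 : Type*) [Fintype 𝓧] [Nonempty 𝓧] {M : ℕ} (hM : 0 < M)
    (L U : 𝓧 → (Fin M → ℝ))
    (Pihat : Set 𝓧) (hPi : Pihat = {x | L x ∈ Par (Set.range L)}) :
    ∀ x : 𝓧, Metric.infDist (U x) (Dom (L '' Pihat)) ≤ dist (U x) (L x) :=
  stmt18_general 𝓧 hM L U Pihat hPi
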